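/- Let a and a* be the annihilation and creation operators on ℓ²(ℕ₀) defined on c₀₀ by a* ψ_n = √(n+1) ψ_{n+1} and a ψ_n = √n ψ_{n−1} (a ψ_0 = 0), and let Q = (a* + a)/√2, P = i(a* − a)/√2 with domain c₀₀, and P_n the canonical projections. Then ‖[Q, P_n] ψ_n‖ = ‖[P, P_n] ψ_n‖ = √(n/2), so {P_n} is not a quasidiagonalizing sequence for Q or for P. -/

import Mathlib

open Filter Finset

/-!
In the oscillator basis both `Q` and `P` are tridiagonal, `T ψ_k = α_k ψ_{k+1} + β_k ψ_{k-1}`.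
Compressing by `P_{n+1}` cuts only the two matrix entries joining `ψ_n` and `ψ_{n+1}`, so
`[T, P_{n+1}] x = ⟪ψ_n, x⟫ α_n ψ_{n+1} - ⟪ψ_{n+1}, x⟫ β_{n+1} ψ_n` on `c₀₀`. At `x = ψ_{n+1}`
this has norm `|β_{n+1}| = √((n+1)/2)`. The same formula bounds the commutator by
`|α_n| + |β_{n+1}|` on the unit ball, which matters: an unbounded `⨆` over `ℝ` would be `0`.
-/

namespace LinearPMap

variable {R E : Type*} [Ring R] [AddCommGroup E] [Module R E]

def commutator (T : E →ₗ.[R] E) (P : E →ₗ[R] E) (hP : ∀ x, P x ∈ T.domain) :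
    T.domain →ₗ[R] E :=
  T.toFun ∘ₗ P.codRestrict T.domain hP ∘ₗ T.domain.subtype - P ∘ₗ T.toFun

@[simp]
lemma commutator_apply (T : E →ₗ.[R] E) (P : E →ₗ[R] E) (hP : ∀ x, P x ∈ T.domain)
    (x : T.domain) : T.commutator P hP x = T ⟨P x, hP x⟩ - P (T x) := rfl

end LinearPMap

lemma Submodule.span_range_subtype_eq_top {R M ι : Type*} [Semiring R] [AddCommMonoid M]
    [Module R M] {p : Submodule R M} {v : ι → M} (hp : p = span R (Set.range v))
    (hv : ∀ i, v i ∈ p) : span R (Set.range fun i => (⟨v i, hv i⟩ : p)) = ⊤ := by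
  apply map_injective_of_injective p.injective_subtype
  rw [map_span, ← Set.range_comp, map_subtype_top]
  exact hp.symm

lemma Orthonormal.sum_inner_smul_eq_ite {𝕜 E ι : Type*} [RCLike 𝕜] [NormedAddCommGroup E]
    [InnerProductSpace 𝕜 E] [DecidableEq ι] {v : ι → E} (hv : Orthonormal 𝕜 v)
    (s : Finset ι) (k : ι) :
    ∑ i ∈ s, inner 𝕜 (v i) (v k) • v i = if k ∈ s then v k else 0 := by
  simp [orthonormal_iff_ite.mp hv]

section Tridiagonal

variable {H : Type*} [NormedAddCommGroup H] [InnerProductSpace ℂ H]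
  {e : ℕ → H} {T : H →ₗ.[ℂ] H} {hedom : ∀ k, e k ∈ T.domain} {α β : ℕ → ℂ}
  {Pr : ℕ → H →ₗ[ℂ] H} {hPrmem : ∀ n x, Pr n x ∈ T.domain}

lemma projection_apply_basis (he : Orthonormal ℂ e)
    (hPr : ∀ n x, Pr n x = ∑ i ∈ range n, inner ℂ (e i) x • e i) (n k : ℕ) :
    Pr n (e k) = if k < n then e k else 0 := by
  simp [hPr, he.sum_inner_smul_eq_ite]

lemma commutator_apply_basis (he : Orthonormal ℂ e)
    (hT : ∀ k, T ⟨e k, hedom k⟩ = α k • e (k + 1) + β k • e (k - 1))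
    (hPr : ∀ n x, Pr n x = ∑ i ∈ range n, inner ℂ (e i) x • e i) (n k : ℕ) :
    T.commutator (Pr (n + 1)) (hPrmem (n + 1)) ⟨e k, hedom k⟩
      = inner ℂ (e n) (e k) • α n • e (n + 1) - inner ℂ (e (n + 1)) (e k) • β (n + 1) • e n := by
  have hPe := projection_apply_basis he hPr
  have hTPe : T ⟨Pr (n + 1) (e k), hPrmem _ _⟩ = if k < n + 1 then T ⟨e k, hedom k⟩ else 0 := by
    split_ifs with hk
    · congr 2; simp [hPe, hk]
    · rw [← T.map_zero]; congr 2; simp [hPe, hk]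
  simp only [LinearPMap.commutator_apply]
  rw [hTPe]
  simp only [hT, map_add, map_smul, hPe, orthonormal_iff_ite.mp he]
  split_ifs <;> first | omega | (subst_vars; simp)

lemma commutator_apply_eq (he : Orthonormal ℂ e) (hdom : T.domain = Submodule.span ℂ (Set.range e))
    (hT : ∀ k, T ⟨e k, hedom k⟩ = α k • e (k + 1) + β k • e (k - 1))
    (hPr : ∀ n x, Pr n x = ∑ i ∈ range n, inner ℂ (e i) x • e i) (n : ℕ) (x : T.domain) :
    T.commutator (Pr (n + 1)) (hPrmem (n + 1)) x
      = inner ℂ (e n) (x : H) • α n • e (n + 1)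
        - inner ℂ (e (n + 1)) (x : H) • β (n + 1) • e n := by
  let rankTwo : T.domain →ₗ[ℂ] H :=
    ((innerₛₗ ℂ (e n)).smulRight (α n • e (n + 1))
      - (innerₛₗ ℂ (e (n + 1))).smulRight (β (n + 1) • e n)) ∘ₗ T.domain.subtype
  have : T.commutator (Pr (n + 1)) (hPrmem (n + 1)) = rankTwo :=
    LinearMap.ext_on_range (Submodule.span_range_subtype_eq_top hdom hedom) fun k => by
      simp [rankTwo, commutator_apply_basis he hT hPr]
  simp [this, rankTwo]

lemma norm_commutator_apply_le (he : Orthonormal ℂ e)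
    (hdom : T.domain = Submodule.span ℂ (Set.range e))
    (hT : ∀ k, T ⟨e k, hedom k⟩ = α k • e (k + 1) + β k • e (k - 1))
    (hPr : ∀ n x, Pr n x = ∑ i ∈ range n, inner ℂ (e i) x • e i) (n : ℕ) (x : T.domain) :
    ‖T.commutator (Pr (n + 1)) (hPrmem (n + 1)) x‖ ≤ (‖α n‖ + ‖β (n + 1)‖) * ‖x‖ := by
  have hinner : ∀ k, ‖inner ℂ (e k) (x : H)‖ ≤ ‖x‖ := fun k => by
    simpa [he.1 k] using norm_inner_le_norm (𝕜 := ℂ) (e k) (x : H)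
  rw [commutator_apply_eq he hdom hT hPr]
  calc _ ≤ ‖x‖ * ‖α n‖ + ‖x‖ * ‖β (n + 1)‖ := by
        refine (norm_sub_le _ _).trans (add_le_add ?_ ?_) <;>
          simp only [norm_smul, he.1 _, mul_one] <;> gcongr <;> exact hinner _
    _ = _ := by ring

lemma commutator_zero (hPr : ∀ n x, Pr n x = ∑ i ∈ range n, inner ℂ (e i) x • e i) :
    T.commutator (Pr 0) (hPrmem 0) = 0 := by
  ext x
  simp only [LinearPMap.commutator_apply, hPr, sum_range_zero, LinearMap.zero_apply, sub_zero]
  exact T.map_zero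

lemma norm_commutator_apply_basis_self (he : Orthonormal ℂ e)
    (hT : ∀ k, T ⟨e k, hedom k⟩ = α k • e (k + 1) + β k • e (k - 1))
    (hPr : ∀ n x, Pr n x = ∑ i ∈ range n, inner ℂ (e i) x • e i)
    (hβ : ∀ k : ℕ, ‖β (k + 1)‖ = √((k + 1 : ℕ) / 2 : ℝ)) (n : ℕ) :
    ‖T.commutator (Pr n) (hPrmem n) ⟨e n, hedom n⟩‖ = √(n / 2 : ℝ) := by
  cases n with
  | zero => simp [commutator_zero hPr]
  | succ n =>
    simp [commutator_apply_basis he hT hPr, orthonormal_iff_ite.mp he, norm_smul, he.1 n,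
      he.1 (n + 1), hβ]

theorem not_tendsto_iSup_norm_commutator (he : Orthonormal ℂ e)
    (hdom : T.domain = Submodule.span ℂ (Set.range e))
    (hT : ∀ k, T ⟨e k, hedom k⟩ = α k • e (k + 1) + β k • e (k - 1))
    (hPr : ∀ n x, Pr n x = ∑ i ∈ range n, inner ℂ (e i) x • e i)
    (hβ : ∀ k : ℕ, ‖β (k + 1)‖ = √((k + 1 : ℕ) / 2 : ℝ)) :
    ¬ Tendsto (fun n => ⨆ ψ : {x : H // x ∈ T.domain ∧ ‖x‖ ≤ 1},
      ‖T.commutator (Pr n) (hPrmem n) ⟨ψ.1, ψ.2.1⟩‖) atTop (nhds 0) := by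
  have hlower : ∀ n : ℕ, √((n + 1 : ℕ) / 2 : ℝ) ≤ ⨆ ψ : {x : H // x ∈ T.domain ∧ ‖x‖ ≤ 1},
      ‖T.commutator (Pr (n + 1)) (hPrmem (n + 1)) ⟨ψ.1, ψ.2.1⟩‖ := by
    intro n
    have hbdd : BddAbove (Set.range fun ψ : {x : H // x ∈ T.domain ∧ ‖x‖ ≤ 1} =>
        ‖T.commutator (Pr (n + 1)) (hPrmem (n + 1)) ⟨ψ.1, ψ.2.1⟩‖) := by
      refine ⟨‖α n‖ + ‖β (n + 1)‖, Set.forall_mem_range.2 fun ψ => ?_⟩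
      calc _ ≤ (‖α n‖ + ‖β (n + 1)‖) * ‖ψ.1‖ := norm_commutator_apply_le he hdom hT hPr n _
        _ ≤ ‖α n‖ + ‖β (n + 1)‖ := mul_le_of_le_one_right (by positivity) ψ.2.2
    rw [← norm_commutator_apply_basis_self he hT hPr hβ]
    exact le_ciSup hbdd ⟨e (n + 1), hedom _, (he.1 _).le⟩
  have hsqrt : Tendsto (fun n : ℕ => √((n + 1 : ℕ) / 2 : ℝ)) atTop atTop :=
    Real.tendsto_sqrt_atTop.comp <| (tendsto_natCast_atTop_atTop.comp
      (tendsto_add_atTop_nat 1)).atTop_div_const two_pos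
  exact fun h => not_tendsto_nhds_of_tendsto_atTop (tendsto_atTop_mono hlower hsqrt) 0
    ((tendsto_add_atTop_iff_nat 1).2 h)

end Tridiagonal

theorem stmt_17_general
    {H : Type*} [NormedAddCommGroup H] [InnerProductSpace ℂ H]
    (e : HilbertBasis ℕ ℂ H)
    (Qop Pop : H →ₗ.[ℂ] H)
    (hdomQ : Qop.domain = Submodule.span ℂ (Set.range ⇑e))
    (hdomP : Pop.domain = Submodule.span ℂ (Set.range ⇑e))
    (hedomQ : ∀ k, (e k : H) ∈ Qop.domain)
    (hedomP : ∀ k, (e k : H) ∈ Pop.domain)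
    (hQ : ∀ n : ℕ, Qop ⟨e n, hedomQ n⟩
      = ((Real.sqrt 2)⁻¹ : ℂ) •
          (((Real.sqrt (n + 1) : ℝ) : ℂ) • e (n + 1)
            + ((Real.sqrt n : ℝ) : ℂ) • e (n - 1)))
    (hP : ∀ n : ℕ, Pop ⟨e n, hedomP n⟩
      = (Complex.I * ((Real.sqrt 2)⁻¹ : ℂ)) •
          (((Real.sqrt (n + 1) : ℝ) : ℂ) • e (n + 1)
            - ((Real.sqrt n : ℝ) : ℂ) • e (n - 1)))
    (Pr : ℕ → H →L[ℂ] H)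
    (hPr : ∀ n x, Pr n x = ∑ i ∈ Finset.range n, ((inner ℂ (e i) x : ℂ) • e i))
    (hPrmemQ : ∀ n x, Pr n x ∈ Qop.domain)
    (hPrmemP : ∀ n x, Pr n x ∈ Pop.domain) :
    (∀ n : ℕ,
      ‖Qop ⟨Pr n (e n), hPrmemQ n (e n)⟩ - Pr n (Qop ⟨e n, hedomQ n⟩)‖
        = Real.sqrt (n / 2 : ℝ)) ∧
    (∀ n : ℕ,
      ‖Pop ⟨Pr n (e n), hPrmemP n (e n)⟩ - Pr n (Pop ⟨e n, hedomP n⟩)‖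
        = Real.sqrt (n / 2 : ℝ)) ∧
    ¬ Filter.Tendsto (fun n : ℕ =>
        ⨆ ψ : {x : H // x ∈ Qop.domain ∧ ‖x‖ ≤ 1},
          ‖Qop ⟨Pr n ψ.1, hPrmemQ n ψ.1⟩ - Pr n (Qop ⟨ψ.1, ψ.2.1⟩)‖)
      Filter.atTop (nhds 0) ∧
    ¬ Filter.Tendsto (fun n : ℕ =>
        ⨆ ψ : {x : H // x ∈ Pop.domain ∧ ‖x‖ ≤ 1},
          ‖Pop ⟨Pr n ψ.1, hPrmemP n ψ.1⟩ - Pr n (Pop ⟨ψ.1, ψ.2.1⟩)‖)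
      Filter.atTop (nhds 0) := by
  set c : ℕ → ℂ := fun k => ((√2)⁻¹ : ℂ) * ((√k : ℝ) : ℂ)
  have hc : ∀ k : ℕ, ‖c k‖ = √(k / 2 : ℝ) := fun k => by
    simp [c, div_eq_inv_mul, abs_of_nonneg (Real.sqrt_nonneg _)]
  have hQc : ∀ k, Qop ⟨e k, hedomQ k⟩ = c (k + 1) • e (k + 1) + c k • e (k - 1) := fun k => by
    simp only [hQ, c, smul_add, smul_smul, Nat.cast_add, Nat.cast_one]
  have hPc : ∀ k, Pop ⟨e k, hedomP k⟩
      = (Complex.I * c (k + 1)) • e (k + 1) + (-(Complex.I * c k)) • e (k - 1) := fun k => by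
    simp only [hP, c, sub_eq_add_neg, smul_add, smul_neg, smul_smul, neg_smul, mul_assoc,
      Nat.cast_add, Nat.cast_one]
  have hPc_norm : ∀ k : ℕ, ‖-(Complex.I * c (k + 1))‖ = √((k + 1 : ℕ) / 2 : ℝ) := fun k => by
    simp only [norm_neg, norm_mul, Complex.norm_I, one_mul, hc]
  exact ⟨norm_commutator_apply_basis_self e.orthonormal hQc hPr (fun k => hc (k + 1)),
    norm_commutator_apply_basis_self e.orthonormal hPc hPr hPc_norm,
    not_tendsto_iSup_norm_commutator e.orthonormal hdomQ hQc hPr (fun k => hc (k + 1)),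
    not_tendsto_iSup_norm_commutator e.orthonormal hdomP hPc hPr hPc_norm⟩

/-- for the position operator `Q = (a* + a)/√2` and momentum
operator `P = i(a* − a)/√2` on the oscillator basis `{ψ_n}_{n≥0}` (domain
`c₀₀`), the commutators with the canonical projections `P_n` satisfy
`‖[Q, P_n] ψ_n‖ = ‖[P, P_n] ψ_n‖ = √(n/2)`; hence `{P_n}` is not a
quasidiagonalizing sequence for `Q` nor for `P`. -/
theorem stmt_17
    {H : Type*} [NormedAddCommGroup H] [InnerProductSpace ℂ H] [CompleteSpace H]
    (e : HilbertBasis ℕ ℂ H)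
    (Qop Pop : H →ₗ.[ℂ] H)
    (hdomQ : Qop.domain = Submodule.span ℂ (Set.range ⇑e))
    (hdomP : Pop.domain = Submodule.span ℂ (Set.range ⇑e))
    (hedomQ : ∀ k, (e k : H) ∈ Qop.domain)
    (hedomP : ∀ k, (e k : H) ∈ Pop.domain)
    (hQ : ∀ n : ℕ, Qop ⟨e n, hedomQ n⟩
      = ((Real.sqrt 2)⁻¹ : ℂ) •
          (((Real.sqrt (n + 1) : ℝ) : ℂ) • e (n + 1)
            + ((Real.sqrt n : ℝ) : ℂ) • e (n - 1)))
    (hP : ∀ n : ℕ, Pop ⟨e n, hedomP n⟩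
      = (Complex.I * ((Real.sqrt 2)⁻¹ : ℂ)) •
          (((Real.sqrt (n + 1) : ℝ) : ℂ) • e (n + 1)
            - ((Real.sqrt n : ℝ) : ℂ) • e (n - 1)))
    (Pr : ℕ → H →L[ℂ] H)
    (hPr : ∀ n x, Pr n x = ∑ i ∈ Finset.range n, ((inner ℂ (e i) x : ℂ) • e i))
    (hPrmemQ : ∀ n x, Pr n x ∈ Qop.domain)
    (hPrmemP : ∀ n x, Pr n x ∈ Pop.domain) :
    (∀ n : ℕ,
      ‖Qop ⟨Pr n (e n), hPrmemQ n (e n)⟩ - Pr n (Qop ⟨e n, hedomQ n⟩)‖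
        = Real.sqrt (n / 2 : ℝ)) ∧
    (∀ n : ℕ,
      ‖Pop ⟨Pr n (e n), hPrmemP n (e n)⟩ - Pr n (Pop ⟨e n, hedomP n⟩)‖
        = Real.sqrt (n / 2 : ℝ)) ∧
    ¬ Filter.Tendsto (fun n : ℕ =>
        ⨆ ψ : {x : H // x ∈ Qop.domain ∧ ‖x‖ ≤ 1},
          ‖Qop ⟨Pr n ψ.1, hPrmemQ n ψ.1⟩ - Pr n (Qop ⟨ψ.1, ψ.2.1⟩)‖)
      Filter.atTop (nhds 0) ∧
    ¬ Filter.Tendsto (fun n : ℕ =>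
        ⨆ ψ : {x : H // x ∈ Pop.domain ∧ ‖x‖ ≤ 1},
          ‖Pop ⟨Pr n ψ.1, hPrmemP n ψ.1⟩ - Pr n (Pop ⟨ψ.1, ψ.2.1⟩)‖)
      Filter.atTop (nhds 0) :=
  stmt_17_general e Qop Pop hdomQ hdomP hedomQ hedomP hQ hP Pr hPr hPrmemQ hPrmemP
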